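/- Let B be the incidence matrix of a symmetric 2-(v,k,λ) design. There exists a complex number a of absolute value 1 such that the matrix obtained from B by replacing every 0 entry with a is a complex Hadamard matrix of order v if and only if (v − √v)/2 ≤ k ≤ (v + √v)/2. -/

import Mathlib

open Matrix

/-- `H` is a complex Hadamard matrix: unimodular entries and `H Hᴴ = n • I`. -/
def IsCHadamard {n : Type*} [Fintype n] [DecidableEq n] (H : Matrix n n ℂ) : Prop :=
  (∀ i j, ‖H i j‖ = 1) ∧
    H * H.conjTranspose = (Fintype.card n : ℂ) • 1

/-- `B` is the incidence matrix (over `ℂ`, with `0`/`1` entries) of a symmetric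
`2-(v,k,λ)` design. -/
def IsIncidence (v k lam : ℕ) (B : Matrix (Fin v) (Fin v) ℂ) : Prop :=
  (∀ i j, B i j = 0 ∨ B i j = 1) ∧
    (∀ i, ∑ j, B i j = (k : ℂ)) ∧ (∀ j, ∑ i, B i j = (k : ℂ)) ∧
    B * B.transpose = ((k : ℂ) - (lam : ℂ)) • 1 + (lam : ℂ) • Matrix.of (fun _ _ => (1 : ℂ))

/-!
With `H = B + a (J - B)` and `|a| = 1`, the row sums of `B` and the shape of `B Bᵀ` give
`H Hᴴ = v I - 2 (1 - Re a)(k - λ)(J - I)`. So `H` is Hadamard iff `Re a = 1 - v / (2 (k - λ))`,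
which some unimodular `a` achieves iff `v ≤ 4 (k - λ)`. Since `λ (v - 1) = k (k - 1)`, one has
`(v - 1)(4 (k - λ) - v) = v - (v - 2k)²`, so this is `(v - 2k)² ≤ v`.
-/

open ComplexConjugate

lemma exists_norm_eq_one_re_eq_iff (r : ℝ) :
    (∃ a : ℂ, ‖a‖ = 1 ∧ a.re = r) ↔ -1 ≤ r ∧ r ≤ 1 := by
  constructor
  · rintro ⟨a, ha, rfl⟩
    exact abs_le.mp (ha ▸ Complex.abs_re_le_norm a)
  · rintro ⟨hr₁, hr₂⟩
    exact ⟨Complex.exp (Real.arccos r * Complex.I), Complex.norm_exp_ofReal_mul_I _,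
      by rw [Complex.exp_ofReal_mul_I_re, Real.cos_arccos hr₁ hr₂]⟩

section FillZeros

variable {m n : Type*}

noncomputable def fillZeros (B : Matrix m n ℂ) (a : ℂ) : Matrix m n ℂ :=
  Matrix.of fun i j => if B i j = 0 then a else B i j

lemma norm_fillZeros_apply {B : Matrix m n ℂ} (hB : ∀ i j, B i j = 0 ∨ B i j = 1) {a : ℂ}
    (ha : ‖a‖ = 1) (i : m) (j : n) : ‖fillZeros B a i j‖ = 1 := by
  rcases hB i j with h | h <;> simp [fillZeros, h, ha]

lemma fill_mul_conj_fill {a b c : ℂ} (ha : ‖a‖ = 1) (hb : b = 0 ∨ b = 1) (hc : c = 0 ∨ c = 1) :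
    (if b = 0 then a else b) * conj (if c = 0 then a else c) =
      (2 - 2 * a.re) * (b * c) + (conj a - 1) * b + (a - 1) * c + 1 := by
  have haa : a * conj a = 1 := by simp [Complex.mul_conj', ha]
  have hre : ((2 * a.re : ℝ) : ℂ) = a + conj a := (Complex.add_conj a).symm
  push_cast at hre
  rcases hb with rfl | rfl <;> rcases hc with rfl | rfl <;> simp [haa]
  linear_combination -hre

lemma fillZeros_mul_conjTranspose_apply [Fintype n] {B : Matrix m n ℂ}
    (hB : ∀ i j, B i j = 0 ∨ B i j = 1) {a : ℂ} (ha : ‖a‖ = 1) (i j : m) :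
    (fillZeros B a * (fillZeros B a)ᴴ) i j =
      (2 - 2 * a.re) * (B * Bᵀ) i j + (conj a - 1) * ∑ l, B i l + (a - 1) * ∑ l, B j l +
        Fintype.card n := by
  simp only [mul_apply, conjTranspose_apply, transpose_apply, fillZeros, of_apply,
    RCLike.star_def, fill_mul_conj_fill ha (hB i _) (hB j _), Finset.sum_add_distrib,
    ← Finset.mul_sum, Finset.sum_const, Finset.card_univ, nsmul_eq_mul, mul_one]

end FillZeros

namespace IsIncidence

variable {v k lam : ℕ} {B : Matrix (Fin v) (Fin v) ℂ}

lemma sq_add_lam_eq (hB : IsIncidence v k lam B) (hv : 0 < v) : k ^ 2 + lam = k + lam * v := by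
  obtain ⟨-, hrow, hcol, hBBT⟩ := hB
  have hsum : ∑ i, ∑ j, (B * Bᵀ) i j = v * k ^ 2 := by
    have hrow_sum : ∀ i, ∑ j, ∑ l, B i l * B j l = k * k := fun i => by
      rw [Finset.sum_comm]
      simp only [← Finset.mul_sum, hcol, ← Finset.sum_mul, hrow]
    simp only [mul_apply, transpose_apply, hrow_sum, Finset.sum_const, Finset.card_univ,
      Fintype.card_fin, nsmul_eq_mul]
    ring
  rw [hBBT] at hsum
  simp only [Matrix.add_apply, Matrix.smul_apply, one_apply, of_apply, smul_eq_mul, mul_ite,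
    mul_one, mul_zero, Finset.sum_add_distrib, Finset.sum_ite_eq, Finset.mem_univ, if_true,
    Finset.sum_const, Finset.card_univ, Fintype.card_fin, nsmul_eq_mul] at hsum
  have : (v : ℂ) * (k ^ 2 + lam) = v * (k + lam * v) := by linear_combination -hsum
  exact_mod_cast mul_left_cancel₀ (Nat.cast_ne_zero.mpr hv.ne') this

lemma fillZeros_mul_conjTranspose_apply (hB : IsIncidence v k lam B) {a : ℂ} (ha : ‖a‖ = 1)
    (i j : Fin v) :
    (fillZeros B a * (fillZeros B a)ᴴ) i j =
      if i = j then (v : ℂ) else v - 2 * (1 - a.re) * (k - lam) := by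
  rw [_root_.fillZeros_mul_conjTranspose_apply hB.1 ha, hB.2.2.2, hB.2.1, hB.2.1,
    Fintype.card_fin]
  have hre : ((2 * a.re : ℝ) : ℂ) = a + conj a := (Complex.add_conj a).symm
  push_cast at hre
  simp only [Matrix.add_apply, Matrix.smul_apply, one_apply, of_apply, smul_eq_mul]
  split_ifs <;> linear_combination (-k : ℂ) * hre

lemma isCHadamard_fillZeros_iff (hB : IsIncidence v k lam B) (hv : 1 < v) (hlk : lam < k)
    {a : ℂ} (ha : ‖a‖ = 1) :
    IsCHadamard (fillZeros B a) ↔ a.re = 1 - v / (2 * (k - lam)) := by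
  have hd : (k - lam : ℝ) ≠ 0 := sub_ne_zero.mpr (by exact_mod_cast hlk.ne')
  have hoff : a.re = 1 - v / (2 * (k - lam)) ↔ (v - 2 * (1 - a.re) * (k - lam) : ℂ) = 0 := by
    rw [eq_sub_iff_add_eq, add_comm, ← eq_sub_iff_add_eq, div_eq_iff (mul_ne_zero two_ne_zero hd),
      sub_eq_zero, mul_comm, mul_right_comm]
    norm_cast
  simp only [IsCHadamard, norm_fillZeros_apply hB.1 ha, implies_true, true_and, Fintype.card_fin,
    hoff]
  constructor
  · intro h
    have h01 := congrFun₂ h ⟨0, by omega⟩ ⟨1, hv⟩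
    simpa [hB.fillZeros_mul_conjTranspose_apply ha] using h01
  · intro h
    ext i j
    rw [hB.fillZeros_mul_conjTranspose_apply ha]
    split_ifs with hij <;> simp [hij, h]

lemma le_four_mul_sub_iff (hB : IsIncidence v k lam B) (hv : 1 < v) :
    (v : ℝ) ≤ 4 * (k - lam) ↔ ((v : ℝ) - 2 * k) ^ 2 ≤ v := by
  have hs : (k : ℝ) ^ 2 + lam = k + lam * v := by exact_mod_cast hB.sq_add_lam_eq (by omega)
  have key : ((v : ℝ) - 1) * (4 * (k - lam) - v) = v - (v - 2 * k) ^ 2 := by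
    linear_combination 4 * hs
  rw [← sub_nonneg, ← sub_nonneg (b := ((v : ℝ) - 2 * k) ^ 2), ← key,
    mul_nonneg_iff_of_pos_left (by simpa using (by exact_mod_cast hv : (1 : ℝ) < v))]

end IsIncidence

theorem stmt0 (v k lam : ℕ) (hlk : lam < k) (hkv : k < v)
    (B : Matrix (Fin v) (Fin v) ℂ) (hB : IsIncidence v k lam B) :
    (∃ a : ℂ, ‖a‖ = 1 ∧
        IsCHadamard (Matrix.of fun i j => if B i j = 0 then a else B i j)) ↔
      (((v : ℝ) - Real.sqrt v) / 2 ≤ (k : ℝ) ∧ (k : ℝ) ≤ ((v : ℝ) + Real.sqrt v) / 2) := by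
  have hv : 1 < v := by omega
  have hd : (0 : ℝ) < k - lam := sub_pos.mpr (by exact_mod_cast hlk)
  calc _ ↔ ∃ a : ℂ, ‖a‖ = 1 ∧ a.re = 1 - v / (2 * (k - lam)) :=
        exists_congr fun a => and_congr_right fun ha => hB.isCHadamard_fillZeros_iff hv hlk ha
    _ ↔ -1 ≤ 1 - (v : ℝ) / (2 * (k - lam)) ∧ 1 - (v : ℝ) / (2 * (k - lam)) ≤ 1 :=
        exists_norm_eq_one_re_eq_iff _
    _ ↔ (v : ℝ) ≤ 4 * (k - lam) := by
        rw [and_iff_left (sub_le_self _ (by positivity)), le_sub_comm, sub_neg_eq_add,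
          div_le_iff₀ (by positivity)]
        ring_nf
    _ ↔ ((v : ℝ) - 2 * k) ^ 2 ≤ v := hB.le_four_mul_sub_iff hv
    _ ↔ _ := by
        rw [Real.sq_le (Nat.cast_nonneg v)]
        constructor <;> rintro ⟨h₁, h₂⟩ <;> constructor <;> linarith
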